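/- Let (X,d,μ) be a uniformly 1/2-connected metric measure space such that μ(B(x,1/2)) ≥ a for some a > 0 and all x ∈ X. Suppose the profile satisfies I₁(t) = o(t), i.e. I₁(t)/t → 0 as t → ∞. Then for every T > 0 there exists t ≥ T with I^↓_{C,1}(t) = I₁(t); consequently, there is a positive increasing sequence (t_i) tending to infinity such that the profile restricted to connected sets agrees with the profile at each t_i. -/

import Mathlib

open Metric MeasureTheory Set ENNReal NNReal Filter

noncomputable section

/-- The closed `h`-neighborhood `A_h = {x : d(x,A) ≤ h}` of a set `A`. -/
def nbhd {X : Type*} [MetricSpace X] (A : Set X) (h : ℝ) : Set X :=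
  {x | Metric.infDist x A ≤ h}

/-- The `h`-boundary `∂_h A = A_h ∩ (Aᶜ)_h` of a set `A`. -/
def hBdry {X : Type*} [MetricSpace X] (A : Set X) (h : ℝ) : Set X := nbhd A h ∩ nbhd Aᶜ h

/-- There is a `b`-chain from `x` to `y` entirely contained in `S`. -/
def ChainIn {X : Type*} [MetricSpace X] (b : ℝ) (S : Set X) (x y : X) : Prop :=
  ∃ (n : ℕ) (c : ℕ → X), c 0 = x ∧ c n = y ∧ (∀ i < n, dist (c i) (c (i + 1)) ≤ b) ∧
    ∀ i ≤ n, c i ∈ S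

/-- `X` is uniformly `b`-connected. -/
def UnifConn (X : Type*) [MetricSpace X] (b : ℝ) : Prop :=
  ∀ E₁ > (0 : ℝ), ∃ E₂ ≥ E₁, ∀ x y : X, dist x y ≤ E₁ → ChainIn b (Metric.ball x E₂) x y

/-- The `h`-profile `I_h(t) = inf {μ(∂_h A) : A measurable, μ A < ∞, μ A ≥ t}`. -/
def profile {X : Type*} [MetricSpace X] [MeasurableSpace X]
    (μ : Measure X) (h : ℝ) (t : ℝ≥0∞) : ℝ≥0∞ :=
  ⨅ (A : Set X) (_ : MeasurableSet A) (_ : μ A ≠ ∞) (_ : t ≤ μ A), μ (hBdry A h)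

/-- A set is (metrically) connected: there is no nontrivial partition `A = A₁ ⊔ A₂`
with `d(A₁, A₂) ≥ 10`. -/
def MConn {X : Type*} [MetricSpace X] (A : Set X) : Prop :=
  ∀ A₁ A₂ : Set X, A = A₁ ∪ A₂ → Disjoint A₁ A₂ →
    (∀ x ∈ A₁, ∀ y ∈ A₂, 10 ≤ dist x y) → A₁ = ∅ ∨ A₂ = ∅

/-- The `h`-profile restricted to connected sets. -/
def connProfile {X : Type*} [MetricSpace X] [MeasurableSpace X]
    (μ : Measure X) (h : ℝ) (t : ℝ≥0∞) : ℝ≥0∞ :=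
  ⨅ (A : Set X) (_ : MeasurableSet A) (_ : MConn A) (_ : μ A ≠ ∞) (_ : t ≤ μ A),
    μ (hBdry A h)

section Aux

variable {X : Type*} [MetricSpace X]

lemma le_infDist' {s : Set X} {x : X} {b : ℝ} (hs : s.Nonempty) (h : ∀ y ∈ s, b ≤ dist x y) :
    b ≤ infDist x s := by
  by_contra hlt
  obtain ⟨y, hy, hd⟩ := (infDist_lt_iff hs).1 (not_le.1 hlt)
  exact absurd (h y hy) (not_le.2 hd)

lemma isClosed_nbhd (A : Set X) (h : ℝ) : IsClosed (nbhd A h) :=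
  isClosed_le (continuous_infDist_pt A) continuous_const

lemma measurableSet_hBdry [MeasurableSpace X] [BorelSpace X] (A : Set X) (h : ℝ) :
    MeasurableSet (hBdry A h) :=
  ((isClosed_nbhd A h).measurableSet).inter ((isClosed_nbhd _ h).measurableSet)

variable [MeasurableSpace X] (μ : Measure X)

lemma profile_le {A : Set X} {h : ℝ} {t : ℝ≥0∞} (hA : MeasurableSet A) (hfin : μ A ≠ ∞)
    (hge : t ≤ μ A) : profile μ h t ≤ μ (hBdry A h) :=
  iInf_le_of_le A (iInf_le_of_le hA (iInf_le_of_le hfin (iInf_le _ hge)))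

lemma connProfile_le {A : Set X} {h : ℝ} {t : ℝ≥0∞} (hA : MeasurableSet A) (hc : MConn A)
    (hfin : μ A ≠ ∞) (hge : t ≤ μ A) : connProfile μ h t ≤ μ (hBdry A h) :=
  iInf_le_of_le A (iInf_le_of_le hA (iInf_le_of_le hc (iInf_le_of_le hfin (iInf_le _ hge))))

lemma profile_le_connProfile (h : ℝ) (t : ℝ≥0∞) : profile μ h t ≤ connProfile μ h t := by
  refine le_iInf fun A => le_iInf fun hA => le_iInf fun _ => le_iInf fun hfin =>
    le_iInf fun hge => ?_
  exact profile_le μ hA hfin hge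

lemma profile_lt_iff {h : ℝ} {t x : ℝ≥0∞} :
    profile μ h t < x ↔ ∃ A : Set X, MeasurableSet A ∧ μ A ≠ ∞ ∧ t ≤ μ A ∧ μ (hBdry A h) < x := by
  simp only [profile, iInf_lt_iff]
  tauto

end Aux

section S1
variable {X : Type*} [MetricSpace X]

/-- A ball of radius 1/2 sits inside the 1-boundary of any set with a point and a co-point. -/
lemma ball_subset_hBdry (hconn : UnifConn X (1/2)) {A : Set X} {x y : X}
    (hx : x ∈ A) (hy : y ∉ A) : ∃ z : X, ball z (1/2) ⊆ hBdry A 1 := by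
  classical
  obtain ⟨E₂, -, hch⟩ := hconn (dist x y + 1) (by positivity)
  obtain ⟨n, c, hc0, hcn, hstep, -⟩ := hch x y (by linarith [dist_nonneg (x := x) (y := y)])
  have hex : ∃ k, c k ∉ A := ⟨n, hcn ▸ hy⟩
  set k := Nat.find hex with hk
  have hck : c k ∉ A := Nat.find_spec hex
  have hkpos : k ≠ 0 := by
    intro h0
    exact hck (by rw [h0, hc0]; exact hx)
  have hprev : c (k - 1) ∈ A := by
    by_contra hna
    have : k ≤ k - 1 := Nat.find_le hna
    omega
  have hkn : k ≤ n := Nat.find_le (hcn ▸ hy)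
  have hstepk : dist (c (k-1)) (c k) ≤ 1/2 := by
    have := hstep (k-1) (by omega)
    rwa [show k - 1 + 1 = k by omega] at this
  refine ⟨c k, fun z hz => ?_⟩
  have hzk : dist z (c k) < 1/2 := mem_ball.1 hz
  constructor
  · show infDist z A ≤ 1
    calc infDist z A ≤ dist z (c (k-1)) := infDist_le_dist_of_mem hprev
    _ ≤ dist z (c k) + dist (c k) (c (k-1)) := dist_triangle _ _ _
    _ ≤ 1 := by rw [dist_comm (c k)]; linarith
  · show infDist z Aᶜ ≤ 1
    calc infDist z Aᶜ ≤ dist z (c k) := infDist_le_dist_of_mem hck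
    _ ≤ 1 := by linarith

variable [MeasurableSpace X] (μ : Measure X)

lemma a_le_bdry (hconn : UnifConn X (1/2)) {a : ℝ≥0∞}
    (hball : ∀ x : X, a ≤ μ (Metric.ball x (1/2))) {A : Set X} {x y : X}
    (hx : x ∈ A) (hy : y ∉ A) : a ≤ μ (hBdry A 1) := by
  obtain ⟨z, hsub⟩ := ball_subset_hBdry hconn hx hy
  exact (hball z).trans (measure_mono hsub)

/-- version with nonemptiness via measures -/
lemma a_le_bdry' (hconn : UnifConn X (1/2)) {a : ℝ≥0∞}
    (hball : ∀ x : X, a ≤ μ (Metric.ball x (1/2))) (hX : μ univ = ∞) {A : Set X}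
    (hne : A.Nonempty) (hfin : μ A ≠ ∞) : a ≤ μ (hBdry A 1) := by
  have hAc : Aᶜ.Nonempty := by
    rw [nonempty_compl]
    intro h
    exact hfin (h ▸ hX)
  obtain ⟨x, hx⟩ := hne
  obtain ⟨y, hy⟩ := hAc
  exact a_le_bdry μ hconn hball hx hy

end S1

section Geom
variable {X : Type*} [MetricSpace X]
variable {A B₁ B₂ : Set X} (hU : A = B₁ ∪ B₂) (hd : Disjoint B₁ B₂)
  (hgap : ∀ x ∈ B₁, ∀ y ∈ B₂, 10 ≤ dist x y) (h1 : B₁.Nonempty) (h2 : B₂.Nonempty)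

include hgap h1 h2 in
lemma far_of_near (x : X) (hx1 : infDist x B₁ ≤ 1) : 9 ≤ infDist x B₂ := by
  refine le_infDist' h2 fun z hz => ?_
  have : 10 - dist x z ≤ infDist x B₁ := by
    refine le_infDist' h1 fun b hb => ?_
    have h10 : (10:ℝ) ≤ dist b z := hgap b hb z hz
    have := dist_triangle b x z
    rw [dist_comm b x] at this
    linarith
  linarith

include hU hgap h1 h2 in
lemma bdry_subset_of_split (hAc : Aᶜ.Nonempty) : hBdry B₁ 1 ⊆ hBdry A 1 := by
  rintro x ⟨hx1, hx2⟩
  have hx1 : infDist x B₁ ≤ 1 := hx1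
  have hx2 : infDist x B₁ᶜ ≤ 1 := hx2
  have h9 : 9 ≤ infDist x B₂ := far_of_near hgap h1 h2 x hx1
  constructor
  · show infDist x A ≤ 1
    exact le_trans (infDist_le_infDist_of_subset (hU ▸ subset_union_left) h1) hx1
  · show infDist x Aᶜ ≤ 1
    by_contra hgt
    push_neg at hgt
    have hmin : (min (infDist x Aᶜ) 9 : ℝ) ≤ infDist x B₁ᶜ := by
      refine le_infDist' (Nonempty.mono (compl_subset_compl.2 (hU ▸ subset_union_left)) hAc)
        fun z hz => ?_
      rcases em (z ∈ A) with hzA | hzA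
      · have hzB2 : z ∈ B₂ := by
          rcases (hU ▸ hzA : z ∈ B₁ ∪ B₂) with h | h
          · exact absurd h hz
          · exact h
        exact le_trans (min_le_right _ _) (le_trans h9 (infDist_le_dist_of_mem hzB2))
      · exact le_trans (min_le_left _ _) (infDist_le_dist_of_mem hzA)
    have : (1:ℝ) < min (infDist x Aᶜ) 9 := lt_min hgt (by norm_num)
    linarith

include hgap h1 h2 in
lemma bdry_disjoint_of_split : hBdry B₁ 1 ∩ hBdry B₂ 1 = ∅ := by
  ext x
  simp only [mem_inter_iff, mem_empty_iff_false, iff_false, not_and]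
  rintro ⟨hx1, -⟩ ⟨hy1, -⟩
  have h9 : 9 ≤ infDist x B₂ := far_of_near hgap h1 h2 x hx1
  have : infDist x B₂ ≤ 1 := hy1
  linarith

include hU hgap h1 in
lemma measurableSet_of_split [MeasurableSpace X] [BorelSpace X] (hA : MeasurableSet A) :
    MeasurableSet B₁ := by
  have hEq : B₁ = A ∩ {x | infDist x B₁ < 5} := by
    ext x
    constructor
    · intro hx
      refine ⟨hU ▸ subset_union_left hx, ?_⟩
      simp [mem_setOf_eq, infDist_zero_of_mem hx]
    · rintro ⟨hxA, hx5⟩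
      rcases (hU ▸ hxA : x ∈ B₁ ∪ B₂) with h | h
      · exact h
      · exfalso
        have : (10:ℝ) ≤ infDist x B₁ :=
          le_infDist' h1 fun b hb => by rw [dist_comm]; exact hgap b hb x h
        simp only [mem_setOf_eq] at hx5
        linarith
  rw [hEq]
  exact hA.inter ((isOpen_lt (continuous_infDist_pt B₁) continuous_const).measurableSet)

end Geom

section Split
variable {X : Type*} [MetricSpace X] [MeasurableSpace X] [BorelSpace X] (μ : Measure X)

lemma split_lemma (hconn : UnifConn X (1/2)) {a : ℝ≥0∞} (ha : 0 < a) (hafin : a ≠ ∞)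
    (hball : ∀ x : X, a ≤ μ (Metric.ball x (1/2))) (hX : μ univ = ∞) :
    ∀ n : ℕ, ∀ A : Set X, MeasurableSet A → A.Nonempty → μ A ≠ ∞ →
      μ (hBdry A 1) ≤ n * a →
    ∃ l : List (Set X), l ≠ [] ∧ (¬ MConn A → 2 ≤ l.length) ∧
      (∀ C ∈ l, MeasurableSet C ∧ MConn C ∧ C.Nonempty ∧ C ⊆ A) ∧
      μ A ≤ (l.map μ).sum ∧ (l.map (fun C => μ (hBdry C 1))).sum ≤ μ (hBdry A 1) := by
  intro n
  induction n with
  | zero =>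
    intro A hA hne hfin hbud
    exfalso
    have := a_le_bdry' μ hconn hball hX hne hfin
    simp only [Nat.cast_zero, zero_mul, nonpos_iff_eq_zero] at hbud
    rw [hbud] at this
    exact absurd (le_antisymm this zero_le) (ne_of_gt ha)
  | succ n ih =>
    intro A hA hne hfin hbud
    by_cases hMC : MConn A
    · refine ⟨[A], by simp, fun h => absurd hMC h, ?_, by simp, by simp⟩
      intro C hC
      simp only [List.mem_singleton] at hC
      subst hC
      exact ⟨hA, hMC, hne, subset_rfl⟩
    · -- split
      unfold MConn at hMC
      push_neg at hMC
      obtain ⟨B₁, B₂, hU, hd, hgap, hB1ne, hB2ne⟩ := hMC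
      have hgap' : ∀ x ∈ B₂, ∀ y ∈ B₁, 10 ≤ dist x y := by
        intro x hx y hy; rw [dist_comm]; exact hgap y hy x hx
      have hU' : A = B₂ ∪ B₁ := by rw [hU, union_comm]
      have hAc : Aᶜ.Nonempty := by
        rw [nonempty_compl]; intro h; exact hfin (h ▸ hX)
      have hm1 : MeasurableSet B₁ := measurableSet_of_split hU hgap hB1ne hA
      have hm2 : MeasurableSet B₂ := measurableSet_of_split hU' hgap' hB2ne hA
      have hsub1 : hBdry B₁ 1 ⊆ hBdry A 1 := bdry_subset_of_split hU hgap hB1ne hB2ne hAc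
      have hsub2 : hBdry B₂ 1 ⊆ hBdry A 1 := bdry_subset_of_split hU' hgap' hB2ne hB1ne hAc
      have hdis : hBdry B₁ 1 ∩ hBdry B₂ 1 = ∅ := bdry_disjoint_of_split hgap hB1ne hB2ne
      have hsum : μ (hBdry B₁ 1) + μ (hBdry B₂ 1) ≤ μ (hBdry A 1) := by
        rw [← measure_union (disjoint_iff_inter_eq_empty.2 hdis) (measurableSet_hBdry _ _)]
        exact measure_mono (union_subset hsub1 hsub2)
      have hfin1 : μ B₁ ≠ ∞ := fun h => hfin (top_le_iff.1 (h ▸ measure_mono (hU ▸ subset_union_left)))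
      have hfin2 : μ B₂ ≠ ∞ := fun h => hfin (top_le_iff.1 (h ▸ measure_mono (hU ▸ subset_union_right)))
      have ha1 : a ≤ μ (hBdry B₁ 1) := a_le_bdry' μ hconn hball hX hB1ne hfin1
      have ha2 : a ≤ μ (hBdry B₂ 1) := a_le_bdry' μ hconn hball hX hB2ne hfin2
      have hbud1 : μ (hBdry B₁ 1) ≤ n * a := by
        have h1 : μ (hBdry B₁ 1) + a ≤ n * a + a := by
          calc μ (hBdry B₁ 1) + a ≤ μ (hBdry B₁ 1) + μ (hBdry B₂ 1) := by gcongr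
          _ ≤ μ (hBdry A 1) := hsum
          _ ≤ (n + 1 : ℕ) * a := hbud
          _ = n * a + a := by push_cast; ring
        exact (ENNReal.add_le_add_iff_right hafin).1 h1
      have hbud2 : μ (hBdry B₂ 1) ≤ n * a := by
        have h1 : μ (hBdry B₂ 1) + a ≤ n * a + a := by
          calc μ (hBdry B₂ 1) + a ≤ μ (hBdry B₁ 1) + μ (hBdry B₂ 1) := by
                rw [add_comm]; gcongr
          _ ≤ μ (hBdry A 1) := hsum
          _ ≤ (n + 1 : ℕ) * a := hbud
          _ = n * a + a := by push_cast; ring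
        exact (ENNReal.add_le_add_iff_right hafin).1 h1
      obtain ⟨l₁, hl₁ne, -, hl₁mem, hl₁mass, hl₁bdry⟩ := ih B₁ hm1 hB1ne hfin1 hbud1
      obtain ⟨l₂, hl₂ne, -, hl₂mem, hl₂mass, hl₂bdry⟩ := ih B₂ hm2 hB2ne hfin2 hbud2
      refine ⟨l₁ ++ l₂, by simp [hl₁ne], fun _ => ?_, ?_, ?_, ?_⟩
      · have e1 : 1 ≤ l₁.length := List.length_pos_iff.2 hl₁ne
        have e2 : 1 ≤ l₂.length := List.length_pos_iff.2 hl₂ne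
        simp only [List.length_append]
        omega
      · intro C hC
        rcases List.mem_append.1 hC with h | h
        · obtain ⟨c1, c2, c3, c4⟩ := hl₁mem C h
          exact ⟨c1, c2, c3, c4.trans (hU ▸ subset_union_left)⟩
        · obtain ⟨c1, c2, c3, c4⟩ := hl₂mem C h
          exact ⟨c1, c2, c3, c4.trans (hU ▸ subset_union_right)⟩
      · have : μ A = μ B₁ + μ B₂ := by
          rw [hU, measure_union (hd.mono_left subset_rfl) hm2]
        rw [this, List.map_append, List.sum_append]
        exact add_le_add hl₁mass hl₂mass
      · rw [List.map_append, List.sum_append]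
        exact le_trans (add_le_add hl₁bdry hl₂bdry) hsum

end Split

section MainInd
variable {X : Type*} [MetricSpace X] [MeasurableSpace X] [BorelSpace X] (μ : Measure X)

lemma list_mem_add_le_sum {l : List ℝ≥0∞} {x a : ℝ≥0∞} (hx : x ∈ l) (h2 : 2 ≤ l.length)
    (hall : ∀ y ∈ l, a ≤ y) : x + a ≤ l.sum := by
  obtain ⟨s, t, rfl⟩ := List.append_of_mem hx
  rw [List.sum_append, List.sum_cons]
  rcases s with - | ⟨y, s'⟩
  · rcases t with - | ⟨z, t'⟩
    · simp at h2
    · have hz : a ≤ z := hall z (by simp)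
      rw [List.sum_cons]
      calc x + a ≤ x + (z + t'.sum) := by
            exact add_le_add_right (hz.trans le_self_add) x
      _ ≤ [].sum + (x + (z + t'.sum)) := by simp
  · have hy : a ≤ y := hall y (by simp)
    have : a ≤ (y :: s').sum := by
      rw [List.sum_cons]; exact hy.trans le_self_add
    calc x + a ≤ (y :: s').sum + (x + t.sum) := by
          rw [add_comm x a]
          exact add_le_add this le_self_add
    _ = (y :: s').sum + (x + t.sum) := rfl

lemma list_sum_map_le {α : Type*} {l : List α} {f g : α → ℝ≥0∞} (h : ∀ C ∈ l, f C ≤ g C) :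
    (l.map f).sum ≤ (l.map g).sum := by
  induction l with
  | nil => simp
  | cons x xs ih =>
    simp only [List.map_cons, List.sum_cons]
    exact add_le_add (h x (by simp)) (ih fun C hC => h C (List.mem_cons_of_mem _ hC))

lemma list_sum_map_add {α : Type*} (l : List α) (f : α → ℝ≥0∞) (c : ℝ≥0∞) :
    (l.map (fun C => f C + c)).sum = (l.map f).sum + l.length * c := by
  induction l with
  | nil => simp
  | cons x xs ih =>
    simp only [List.map_cons, List.sum_cons, ih, List.length_cons]
    push_cast
    ring

lemma list_sum_map_mul_left {α : Type*} (l : List α) (f : α → ℝ≥0∞) (c : ℝ≥0∞) :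
    (l.map (fun C => c * f C)).sum = c * (l.map f).sum := by
  induction l with
  | nil => simp
  | cons x xs ih =>
    simp only [List.map_cons, List.sum_cons, ih, mul_add]

lemma list_sum_map_mul_right {α : Type*} (l : List α) (f : α → ℝ≥0∞) (c : ℝ≥0∞) :
    (l.map (fun C => f C * c)).sum = (l.map f).sum * c := by
  induction l with
  | nil => simp
  | cons x xs ih =>
    simp only [List.map_cons, List.sum_cons, ih, add_mul]

lemma profile_pos (hconn : UnifConn X (1/2)) {a : ℝ≥0∞}
    (hball : ∀ x : X, a ≤ μ (Metric.ball x (1/2))) (hX : μ univ = ∞) {s : ℝ≥0∞} (hs : 0 < s) :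
    a ≤ profile μ 1 s := by
  refine le_iInf fun A => le_iInf fun hA => le_iInf fun hfin => le_iInf fun hge => ?_
  have hne : A.Nonempty := by
    rcases Set.eq_empty_or_nonempty A with rfl | h
    · exfalso
      have hs0 : s = 0 := le_antisymm (by simpa using hge) zero_le
      exact absurd hs0 (ne_of_gt hs)
    · exact h
  exact a_le_bdry' μ hconn hball hX hne hfin

lemma main_induction (hconn : UnifConn X (1/2)) {a T : ℝ≥0∞} (ha : 0 < a) (hafin : a ≠ ∞)
    (hT0 : 0 < T) (hTfin : T ≠ ∞)
    (hball : ∀ x : X, a ≤ μ (Metric.ball x (1/2))) (hX : μ univ = ∞)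
    (hfail : ∀ t : ℝ≥0∞, T ≤ t → t ≠ ∞ → profile μ 1 t < connProfile μ 1 t) :
    ∀ n : ℕ, ∀ s : ℝ≥0∞, T ≤ s → s ≠ ∞ → profile μ 1 s ≤ n * (a/2) →
      s * a + 2*T*a ≤ 4*T*(profile μ 1 s) := by
  have ha2 : (0:ℝ≥0∞) < a/2 := ENNReal.div_pos ha.ne' (by norm_num)
  have h2a : (2:ℝ≥0∞) * (a/2) = a := by
    rw [mul_comm]
    exact ENNReal.div_mul_cancel (by norm_num) (by norm_num)
  intro n
  induction n with
  | zero =>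
    intro s hTs hsfin hbud
    exfalso
    simp only [Nat.cast_zero, zero_mul, nonpos_iff_eq_zero] at hbud
    have := profile_pos μ hconn hball hX (lt_of_lt_of_le hT0 hTs)
    rw [hbud] at this
    exact absurd (le_antisymm this zero_le) (ne_of_gt ha)
  | succ n ih =>
    intro s hTs hsfin hbud
    set P := profile μ 1 s with hP
    have hPfin : P ≠ ∞ := by
      refine ne_top_of_le_ne_top ?_ hbud
      exact ENNReal.mul_ne_top (by simp) (ne_top_of_le_ne_top hafin ENNReal.half_le_self)
    have hfails : P < connProfile μ 1 s := hfail s hTs hsfin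
    have hlt : P < min (connProfile μ 1 s) (P + a/2) :=
      lt_min hfails (ENNReal.lt_add_right hPfin ha2.ne')
    obtain ⟨A, hA, hAfin, hsA, hbA⟩ := (profile_lt_iff μ).1 hlt
    have bd1 : μ (hBdry A 1) < connProfile μ 1 s := lt_of_lt_of_le hbA (min_le_left _ _)
    have bd2 : μ (hBdry A 1) ≤ P + a/2 := le_of_lt (lt_of_lt_of_le hbA (min_le_right _ _))
    have hAne : A.Nonempty := by
      rcases Set.eq_empty_or_nonempty A with rfl | h
      · exfalso
        have hs0 : s = 0 := le_antisymm (by simpa using hsA) zero_le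
        exact absurd hs0 (ne_of_gt (hT0.trans_le hTs))
      · exact h
    have hbudA : μ (hBdry A 1) ≤ ((n + 2 : ℕ) : ℝ≥0∞) * a := by
      calc μ (hBdry A 1) ≤ P + a/2 := bd2
      _ ≤ (n+1 : ℕ) * (a/2) + a/2 := by gcongr
      _ = ((n+2 : ℕ) : ℝ≥0∞) * (a/2) := by push_cast; ring
      _ ≤ ((n+2 : ℕ) : ℝ≥0∞) * a := by
          gcongr
          exact ENNReal.half_le_self
    obtain ⟨l, hlne, hl2, hlmem, hlmass, hlbdry⟩ :=
      split_lemma μ hconn ha hafin hball hX (n+2) A hA hAne hAfin hbudA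
    have hnotMC : ¬ MConn A := by
      intro hMC
      exact absurd (connProfile_le μ hA hMC hAfin hsA) (not_le.2 bd1)
    have hlen2 : 2 ≤ l.length := hl2 hnotMC
    -- per-piece bound
    have hpiece : ∀ C ∈ l, μ C * a + 2*T*a ≤ 4*T*(μ (hBdry C 1)) := by
      intro C hC
      obtain ⟨hCm, hCmc, hCne, hCsub⟩ := hlmem C hC
      have hCfin : μ C ≠ ∞ := fun h => hAfin (top_le_iff.1 (h ▸ measure_mono hCsub))
      have haC : a ≤ μ (hBdry C 1) := a_le_bdry' μ hconn hball hX hCne hCfin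
      rcases lt_or_ge (μ C) T with hltT | hgeT
      · calc μ C * a + 2*T*a ≤ T * a + 2*T*a := add_le_add_left (mul_le_mul_left hltT.le a) _
        _ = 3*(T*a) := by ring
        _ ≤ 4*(T*a) := mul_le_mul_left (by norm_num) _
        _ = 4*T*a := by ring
        _ ≤ 4*T*(μ (hBdry C 1)) := by gcongr
      · have hCconn : connProfile μ 1 (μ C) ≤ μ (hBdry C 1) :=
          connProfile_le μ hCm hCmc hCfin le_rfl
        have hfailC : profile μ 1 (μ C) < connProfile μ 1 (μ C) := hfail _ hgeT hCfin
        have hPC : profile μ 1 (μ C) ≤ μ (hBdry C 1) := le_of_lt (lt_of_lt_of_le hfailC hCconn)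
        -- IH premise
        have hprem : profile μ 1 (μ C) ≤ n * (a/2) := by
          have step1 : μ (hBdry C 1) + a ≤ (l.map (fun C => μ (hBdry C 1))).sum := by
            refine list_mem_add_le_sum (List.mem_map_of_mem hC) (by simpa using hlen2) ?_
            intro y hy
            obtain ⟨D, hD, rfl⟩ := List.mem_map.1 hy
            obtain ⟨hDm, -, hDne, hDsub⟩ := hlmem D hD
            exact a_le_bdry' μ hconn hball hX hDne
              (fun h => hAfin (top_le_iff.1 (h ▸ measure_mono hDsub)))
          have step2 : profile μ 1 (μ C) + a ≤ n * (a/2) + a := by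
            calc profile μ 1 (μ C) + a ≤ μ (hBdry C 1) + a := by gcongr
            _ ≤ (l.map (fun C => μ (hBdry C 1))).sum := step1
            _ ≤ μ (hBdry A 1) := hlbdry
            _ ≤ P + a/2 := bd2
            _ ≤ (n+1 : ℕ) * (a/2) + a/2 := by gcongr
            _ = n * (a/2) + a := by
                push_cast
                rw [add_mul, one_mul, add_assoc, ← two_mul, h2a]
          exact (ENNReal.add_le_add_iff_right hafin).1 step2
        have := ih (μ C) hgeT hCfin hprem
        calc μ C * a + 2*T*a ≤ 4*T*(profile μ 1 (μ C)) := this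
        _ ≤ 4*T*(μ (hBdry C 1)) := by gcongr
    -- summation
    have hsum1 : (l.map (fun C => μ C * a + 2*T*a)).sum ≤
        (l.map (fun C => 4*T*(μ (hBdry C 1)))).sum := list_sum_map_le hpiece
    have hsum2 : (l.map (fun C => μ C * a + 2*T*a)).sum
        = (l.map μ).sum * a + l.length * (2*T*a) := by
      rw [list_sum_map_add l (fun C => μ C * a) (2*T*a),
        list_sum_map_mul_right l (fun C => μ C) a]
    have hsum3 : (l.map (fun C => 4*T*(μ (hBdry C 1)))).sum
        = 4*T*(l.map (fun C => μ (hBdry C 1))).sum :=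
      list_sum_map_mul_left l _ _
    have hTa : (2:ℝ≥0∞)*T*a ≠ ∞ := by
      exact ENNReal.mul_ne_top (ENNReal.mul_ne_top (by norm_num) hTfin) hafin
    have hfinal : s * a + 2*(2*T*a) ≤ 4*T*P + 2*T*a := by
      calc s * a + 2*(2*T*a) ≤ (l.map μ).sum * a + l.length * (2*T*a) := by
            refine add_le_add (mul_le_mul_left (hsA.trans hlmass) a) ?_
            have h2l : ((2:ℕ):ℝ≥0∞) ≤ (l.length:ℝ≥0∞) := by exact_mod_cast hlen2
            calc (2:ℝ≥0∞)*(2*T*a) = ((2:ℕ):ℝ≥0∞) * (2*T*a) := by norm_num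
            _ ≤ (l.length:ℝ≥0∞) * (2*T*a) := mul_le_mul_left h2l _
      _ = (l.map (fun C => μ C * a + 2*T*a)).sum := hsum2.symm
      _ ≤ 4*T*(l.map (fun C => μ (hBdry C 1))).sum := by rw [← hsum3]; exact hsum1
      _ ≤ 4*T*(P + a/2) := by gcongr; exact hlbdry.trans bd2
      _ = 4*T*P + 2*T*a := by
          rw [mul_add]
          congr 1
          calc (4:ℝ≥0∞)*T*(a/2) = 2*T*(2*(a/2)) := by rw [div_eq_mul_inv]; ring
          _ = 2*T*a := by rw [h2a]
    have : s * a + 2*T*a + 2*T*a ≤ 4*T*P + 2*T*a := by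
      calc s * a + 2*T*a + 2*T*a = s * a + 2*(2*T*a) := by ring
      _ ≤ 4*T*P + 2*T*a := hfinal
    exact (ENNReal.add_le_add_iff_right hTa).1 this

end MainInd

section Final
variable {X : Type*} [MetricSpace X] [MeasurableSpace X] [BorelSpace X] (μ : Measure X)

lemma measure_univ_eq_top
    (hlittleo : ∀ ε : ℝ≥0, 0 < ε → ∃ T : ℝ≥0∞, T ≠ ∞ ∧
      ∀ t : ℝ≥0∞, T ≤ t → t ≠ ∞ → profile μ 1 t ≤ (ε : ℝ≥0∞) * t) :
    μ univ = ∞ := by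
  by_contra hμ
  obtain ⟨T₁, hT₁fin, hbound⟩ := hlittleo 1 one_pos
  set t := T₁ + μ univ + 1 with ht
  have htfin : t ≠ ∞ := by
    simp [ht, ENNReal.add_eq_top, hT₁fin, hμ]
  have htge : T₁ ≤ t := by
    rw [ht, add_assoc]
    exact le_self_add
  have hunlt : μ univ < t := by
    calc μ univ < μ univ + 1 := ENNReal.lt_add_right hμ one_ne_zero
    _ ≤ t := by rw [ht, add_assoc]; exact le_add_self
  have htop : profile μ 1 t = ⊤ := by
    refine le_antisymm le_top ?_
    refine le_iInf fun A => le_iInf fun _ => le_iInf fun _ => le_iInf fun hge => ?_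
    exact absurd hge (not_le.2 (lt_of_le_of_lt (measure_mono (subset_univ A)) hunlt))
  have := hbound t htge htfin
  rw [htop] at this
  simp only [ENNReal.coe_one, one_mul, top_le_iff] at this
  exact htfin this

lemma key_lemma (hconn : UnifConn X (1/2)) {a : ℝ≥0∞} (ha : 0 < a)
    (hball : ∀ x : X, a ≤ μ (Metric.ball x (1/2)))
    (hlittleo : ∀ ε : ℝ≥0, 0 < ε → ∃ T : ℝ≥0∞, T ≠ ∞ ∧
      ∀ t : ℝ≥0∞, T ≤ t → t ≠ ∞ → profile μ 1 t ≤ (ε : ℝ≥0∞) * t) :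
    ∀ T : ℝ≥0∞, 0 < T → T ≠ ∞ → ∃ t : ℝ≥0∞, T ≤ t ∧ t ≠ ∞ ∧
      connProfile μ 1 t = profile μ 1 t := by
  intro T hT0 hTfin
  have hX : μ univ = ∞ := measure_univ_eq_top μ hlittleo
  set a' := min a 1 with ha'def
  have ha' : 0 < a' := lt_min ha one_pos
  have ha'fin : a' ≠ ∞ := ne_top_of_le_ne_top one_ne_top (min_le_right a 1)
  have hball' : ∀ x : X, a' ≤ μ (Metric.ball x (1/2)) :=
    fun x => le_trans (min_le_left a 1) (hball x)
  by_contra hcon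
  push_neg at hcon
  have hfail : ∀ t : ℝ≥0∞, T ≤ t → t ≠ ∞ → profile μ 1 t < connProfile μ 1 t := by
    intro t h1 h2
    refine lt_of_le_of_ne (profile_le_connProfile μ 1 t) fun he => ?_
    exact hcon t h1 h2 he.symm
  -- choose ε
  set q := a' / (8 * T) with hq
  have h8T0 : (8:ℝ≥0∞) * T ≠ 0 := by
    simp [hT0.ne']
  have h8Tfin : (8:ℝ≥0∞) * T ≠ ∞ := ENNReal.mul_ne_top (by norm_num) hTfin
  have hq0 : q ≠ 0 := by
    simp only [hq, ne_eq, ENNReal.div_eq_zero_iff, not_or]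
    exact ⟨ha'.ne', h8Tfin⟩
  have hqfin : q ≠ ∞ := (ENNReal.div_lt_top ha'fin h8T0).ne
  set ε := q.toNNReal with hε
  have hεpos : 0 < ε := ENNReal.toNNReal_pos hq0 hqfin
  have hεq : (ε : ℝ≥0∞) = q := ENNReal.coe_toNNReal hqfin
  obtain ⟨Tε, hTεfin, hbound⟩ := hlittleo ε hεpos
  set s := T + Tε + 1 with hs
  have hsfin : s ≠ ∞ := by simp [hs, ENNReal.add_eq_top, hTfin, hTεfin]
  have hTs : T ≤ s := by rw [hs, add_assoc]; exact le_self_add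
  have hTεs : Tε ≤ s := by
    rw [hs]
    calc Tε ≤ T + Tε := le_add_self
    _ ≤ T + Tε + 1 := le_self_add
  have hPs : profile μ 1 s ≤ (ε : ℝ≥0∞) * s := hbound s hTεs hsfin
  have hεsfin : (ε : ℝ≥0∞) * s ≠ ∞ := ENNReal.mul_ne_top ENNReal.coe_ne_top hsfin
  -- find n
  have ha2' : a' / 2 ≠ 0 := by
    simp only [ne_eq, ENNReal.div_eq_zero_iff, not_or]
    exact ⟨ha'.ne', by norm_num⟩
  have ha2fin : a' / 2 ≠ ∞ := ne_top_of_le_ne_top ha'fin ENNReal.half_le_self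
  obtain ⟨n, hn⟩ := ENNReal.exists_nat_gt (ENNReal.div_lt_top hεsfin ha2').ne
  have hbud : profile μ 1 s ≤ n * (a'/2) := by
    refine hPs.trans (le_of_lt ?_)
    exact (ENNReal.div_lt_iff (Or.inl ha2') (Or.inl ha2fin)).1 hn
  have hmain := main_induction μ hconn ha' ha'fin hT0 hTfin hball' hX hfail n s hTs hsfin hbud
  -- 4*T*q = a'/2
  have hcancel : (8:ℝ≥0∞) * T * q = a' := by
    rw [hq]
    exact ENNReal.mul_div_cancel h8T0 h8Tfin
  have h4Tq : (4:ℝ≥0∞) * T * q = a' / 2 := by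
    have h2 : (2:ℝ≥0∞) * (4 * T * q) = a' := by
      rw [← hcancel]; ring
    rw [ENNReal.eq_div_iff (by norm_num) (by norm_num)]
    exact h2
  have hcontr : s * a' < s * a' := by
    calc s * a' ≤ s * a' + 2*T*a' := le_self_add
    _ ≤ 4*T*(profile μ 1 s) := hmain
    _ ≤ 4*T*((ε : ℝ≥0∞) * s) := by gcongr
    _ = (4*T*q) * s := by rw [hεq]; ring
    _ = (a'/2) * s := by rw [h4Tq]
    _ = (s * a') / 2 := by
        rw [ENNReal.div_eq_inv_mul, ENNReal.div_eq_inv_mul]; ring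
    _ < s * a' := by
        refine ENNReal.half_lt_self ?_ ?_
        · simp only [ne_eq, mul_eq_zero, not_or]
          refine ⟨?_, ha'.ne'⟩
          exact (lt_of_lt_of_le hT0 hTs).ne'
        · exact ENNReal.mul_ne_top hsfin ha'fin
  exact lt_irrefl _ hcontr

end Final

theorem connected_profile_equals_profile_along_sequence
    {X : Type*} [MetricSpace X] [MeasurableSpace X] [BorelSpace X]
    (μ : Measure X) [SigmaFinite μ]
    (hconn : UnifConn X (1 / 2))
    (a : ℝ≥0∞) (ha : 0 < a) (hball : ∀ x : X, a ≤ μ (Metric.ball x (1 / 2)))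
    (hlittleo : ∀ ε : ℝ≥0, 0 < ε → ∃ T : ℝ≥0∞, T ≠ ∞ ∧
      ∀ t : ℝ≥0∞, T ≤ t → t ≠ ∞ → profile μ 1 t ≤ (ε : ℝ≥0∞) * t) :
    (∀ T : ℝ≥0∞, 0 < T → T ≠ ∞ → ∃ t : ℝ≥0∞, T ≤ t ∧ t ≠ ∞ ∧
      connProfile μ 1 t = profile μ 1 t) ∧
    ∃ t : ℕ → ℝ≥0∞, StrictMono t ∧ (∀ i, 0 < t i ∧ t i ≠ ∞) ∧
      Tendsto t atTop (nhds ⊤) ∧ ∀ i, connProfile μ 1 (t i) = profile μ 1 (t i) := by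
  have key := key_lemma μ hconn ha hball hlittleo
  refine ⟨key, ?_⟩
  classical
  let S := {t : ℝ≥0∞ // t ≠ ∞ ∧ 0 < t ∧ connProfile μ 1 t = profile μ 1 t}
  have h0 : S := by
    refine ⟨(key 1 one_pos one_ne_top).choose, ?_, ?_, ?_⟩
    · exact (key 1 one_pos one_ne_top).choose_spec.2.1
    · exact lt_of_lt_of_le one_pos (key 1 one_pos one_ne_top).choose_spec.1
    · exact (key 1 one_pos one_ne_top).choose_spec.2.2
  let step : S → S := fun x =>
    ⟨(key (x.1 + 1) (lt_of_lt_of_le one_pos le_add_self)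
        (ENNReal.add_ne_top.2 ⟨x.2.1, one_ne_top⟩)).choose,
      (key (x.1 + 1) (lt_of_lt_of_le one_pos le_add_self)
        (ENNReal.add_ne_top.2 ⟨x.2.1, one_ne_top⟩)).choose_spec.2.1,
      lt_of_lt_of_le (lt_of_lt_of_le one_pos le_add_self)
        (key (x.1 + 1) (lt_of_lt_of_le one_pos le_add_self)
          (ENNReal.add_ne_top.2 ⟨x.2.1, one_ne_top⟩)).choose_spec.1,
      (key (x.1 + 1) (lt_of_lt_of_le one_pos le_add_self)
        (ENNReal.add_ne_top.2 ⟨x.2.1, one_ne_top⟩)).choose_spec.2.2⟩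
  let g : ℕ → S := fun n => Nat.rec h0 (fun _ p => step p) n
  have hgsucc : ∀ n, g (n+1) = step (g n) := fun n => rfl
  have hstep : ∀ n : ℕ, (g n).1 + 1 ≤ (g (n+1)).1 := by
    intro n
    rw [hgsucc n]
    exact (key ((g n).1 + 1) (lt_of_lt_of_le one_pos le_add_self)
      (ENNReal.add_ne_top.2 ⟨(g n).2.1, one_ne_top⟩)).choose_spec.1
  refine ⟨fun n => (g n).1, ?_, ?_, ?_, ?_⟩
  · refine strictMono_nat_of_lt_succ fun n => ?_
    exact lt_of_lt_of_le (ENNReal.lt_add_right (g n).2.1 one_ne_zero) (hstep n)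
  · exact fun i => ⟨(g i).2.2.1, (g i).2.1⟩
  · have hn : ∀ n : ℕ, (n : ℝ≥0∞) ≤ (g n).1 := by
      intro n
      induction n with
      | zero => simp
      | succ n ih =>
        push_cast
        exact le_trans (add_le_add_left ih 1) (hstep n)
    exact tendsto_nhds_top_mono ENNReal.tendsto_nat_nhds_top (Filter.Eventually.of_forall hn)
  · exact fun i => (g i).2.2.2
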